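/- Fix θ ∈ ℝ^{k+1}. If φ_{0U}(θ) < ∞ and 1 − γ_{+U}(θ) > 0 for every nonempty U ⊆ J, then Σ_{U} (1 − γ_{+U}(θ)) φ_{+U}(θ) ≤ Σ_{U} (γ_{0U}(θ) − 1) φ_{0U}(θ) < ∞, where both sums range over all nonempty U ⊆ J. -/

import Mathlib

open Filter Topology
open scoped ENNReal

noncomputable section

/-- Traffic intensity ρ = λ / Σ μᵢ. -/
def rho (k : ℕ) (lam : ℝ) (μ : Fin k → ℝ) : ℝ := lam / ∑ i, μ i

/-- Index set of the shortest queues: the zero coordinates of the difference vector. -/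
def zeroSet (k : ℕ) (y : Fin k → ℕ) : Finset (Fin k) :=
  Finset.univ.filter (fun i => y i = 0)

/-- One-step transition probability of the uniformized JSQ chain `Z = (M, Y)` on
`ℕ × (Fin k → ℕ)`, where `M` is the minimum queue length and `Y` the vector of
differences from the minimum. -/
def jsqP (k : ℕ) (lam : ℝ) (μ : Fin k → ℝ) (s s' : ℕ × (Fin k → ℕ)) : ℝ :=
  (if (zeroSet k s.2).card = 1 then
      (if s' = (s.1 + 1, fun j => s.2 j - 1) then lam else 0)
    else
      ∑ i ∈ zeroSet k s.2,
        (if s' = (s.1, Function.update s.2 i 1) then lam / (zeroSet k s.2).card else 0))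
  + (∑ j ∈ (zeroSet k s.2)ᶜ,
      (if s' = (s.1, Function.update s.2 j (s.2 j - 1)) then μ j else 0))
  + (∑ i ∈ zeroSet k s.2,
      (if s' = (if s.1 = 0 then s else (s.1 - 1, fun j => if j = i then 0 else s.2 j + 1))
        then μ i else 0))

/-- The exponential weight `e^{θ·Z}` for `θ ∈ ℝ^{k+1}` and a state `Z = (m, y)`. -/
def expWeight (k : ℕ) (θ : Fin (k + 1) → ℝ) (s : ℕ × (Fin k → ℕ)) : ℝ :=
  Real.exp (θ 0 * (s.1 : ℝ) + ∑ i : Fin k, θ i.succ * (s.2 i : ℝ))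

/-- The stationary moment generating function `φ(θ) = E[e^{θ·Z}] ∈ [0,∞]`. -/
def phi (k : ℕ) (π : ℕ × (Fin k → ℕ) → ℝ) (θ : Fin (k + 1) → ℝ) : ℝ≥0∞ :=
  ∑' s : ℕ × (Fin k → ℕ), ENNReal.ofReal (π s * expWeight k θ s)

/-- `φ_{+U}(θ) = E[e^{θ·Z} 1(Z ∈ S_{+U})]`. -/
def phiPlus (k : ℕ) (π : ℕ × (Fin k → ℕ) → ℝ) (U : Finset (Fin k))
    (θ : Fin (k + 1) → ℝ) : ℝ≥0∞ :=
  ∑' s : ℕ × (Fin k → ℕ),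
    if 1 ≤ s.1 ∧ zeroSet k s.2 = U then ENNReal.ofReal (π s * expWeight k θ s) else 0

/-- `φ_{0U}(θ) = E[e^{θ·Z} 1(Z ∈ S_{0U})]`. -/
def phiZero (k : ℕ) (π : ℕ × (Fin k → ℕ) → ℝ) (U : Finset (Fin k))
    (θ : Fin (k + 1) → ℝ) : ℝ≥0∞ :=
  ∑' s : ℕ × (Fin k → ℕ),
    if s.1 = 0 ∧ zeroSet k s.2 = U then ENNReal.ofReal (π s * expWeight k θ s) else 0

/-- The mgf `γ_{+U}(θ)` of the one-step increment from states in `S_{+U}`. -/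
def gammaPlus (k : ℕ) (lam : ℝ) (μ : Fin k → ℝ) (U : Finset (Fin k))
    (θ : Fin (k + 1) → ℝ) : ℝ :=
  (if U.card = 1 then lam * Real.exp (θ 0 - ∑ j ∈ Uᶜ, θ j.succ)
    else ∑ i ∈ U, (lam / U.card) * Real.exp (θ i.succ))
  + ∑ j ∈ Uᶜ, μ j * Real.exp (-θ j.succ)
  + ∑ i ∈ U, μ i * Real.exp (-θ 0 + ∑ j ∈ Finset.univ.erase i, θ j.succ)

/-- The mgf `γ_{0U}(θ)` of the one-step increment from states in `S_{0U}`. -/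
def gammaZero (k : ℕ) (lam : ℝ) (μ : Fin k → ℝ) (U : Finset (Fin k))
    (θ : Fin (k + 1) → ℝ) : ℝ :=
  (if U.card = 1 then lam * Real.exp (θ 0 - ∑ j ∈ Uᶜ, θ j.succ)
    else ∑ i ∈ U, (lam / U.card) * Real.exp (θ i.succ))
  + ∑ j ∈ Uᶜ, μ j * Real.exp (-θ j.succ)
  + ∑ i ∈ U, μ i

end

/-!
With `w = e^{θ·Z}`, one step of the chain multiplies `w` by `γ_{+U}` from `S_{+U}` and by `γ_{0U}`
from `S_{0U}`. Stationarity of `π` therefore gives, in `[0, ∞]`,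
`Σ_U (φ_{+U} + φ_{0U}) = Σ_U (γ_{+U} φ_{+U} + γ_{0U} φ_{0U})`, which rearranges to the claimed
inequality (even an equality) once every `φ_{+U}` is known to be finite.

Finiteness is a Foster–Lyapunov argument: `P w ≤ a w + 1{M = 0} P w` with `a = max_U γ_{+U} < 1`.
Iterating this drift on the truncations `min (aⁿ w) N` against the invariant `π` bounds
`E[w(Z)]` by `(1 - a)⁻¹ Σ_U γ_{0U} φ_{0U} < ∞`.
-/

section Kernel

variable {α : Type*}

theorem ENNReal.tendsto_tsum_of_dominated_convergence {F : ℕ → α → ℝ≥0∞} {f : α → ℝ≥0∞}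
    (bound : α → ℝ≥0∞) (h_bound : ∀ n s, F n s ≤ bound s) (h_fin : ∑' s, bound s ≠ ⊤)
    (h_lim : ∀ s, Tendsto (fun n => F n s) atTop (𝓝 (f s))) :
    Tendsto (fun n => ∑' s, F n s) atTop (𝓝 (∑' s, f s)) := by
  let : MeasurableSpace α := ⊤
  simp only [← MeasureTheory.lintegral_count' measurable_from_top] at h_fin ⊢
  exact MeasureTheory.tendsto_lintegral_of_dominated_convergence bound
    (fun _ => measurable_from_top) (fun n => .of_forall (h_bound n)) h_fin (.of_forall h_lim)

theorem ENNReal.tsum_le_of_forall_tsum_mul_min_le {π f : α → ℝ≥0∞} {K : ℝ≥0∞}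
    (h : ∀ N : ℕ, ∑' s, π s * min (f s) N ≤ K) : ∑' s, π s * f s ≤ K := by
  let : MeasurableSpace α := ⊤
  have hsup : ∀ s, π s * f s = ⨆ N : ℕ, π s * min (f s) N := fun s => by
    rw [← ENNReal.mul_iSup, ← inf_iSup_eq, ENNReal.iSup_natCast, inf_top_eq]
  simp only [hsup, ← MeasureTheory.lintegral_count' measurable_from_top] at h ⊢
  rw [MeasureTheory.lintegral_iSup (fun _ => measurable_from_top)]
  · exact iSup_le h
  · intro N M hNM s
    dsimp only
    gcongr

noncomputable def kernelApply (P : α → α → ℝ≥0∞) (f : α → ℝ≥0∞) (s : α) : ℝ≥0∞ :=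
  ∑' t, P s t * f t

variable {P : α → α → ℝ≥0∞}

theorem kernelApply_mono {f g : α → ℝ≥0∞} (h : ∀ t, f t ≤ g t) (s : α) :
    kernelApply P f s ≤ kernelApply P g s :=
  ENNReal.tsum_le_tsum fun t => by gcongr; exact h t

theorem kernelApply_const_mul (c : ℝ≥0∞) (f : α → ℝ≥0∞) (s : α) :
    kernelApply P (fun t => c * f t) s = c * kernelApply P f s := by
  simp only [kernelApply, ← ENNReal.tsum_mul_left, mul_left_comm c]

theorem kernelApply_min_le {s : α} (hP : ∑' t, P s t ≤ 1) (f : α → ℝ≥0∞) (N : ℝ≥0∞) :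
    kernelApply P (fun t => min (f t) N) s ≤ min (kernelApply P f s) N := by
  refine le_min (kernelApply_mono (fun t => min_le_left _ _) s) ?_
  calc kernelApply P (fun t => min (f t) N) s ≤ ∑' t, P s t * N :=
        ENNReal.tsum_le_tsum fun t => by gcongr; exact min_le_right _ _
    _ = (∑' t, P s t) * N := ENNReal.tsum_mul_right
    _ ≤ 1 * N := by gcongr
    _ = N := one_mul N

theorem tsum_mul_kernelApply {π : α → ℝ≥0∞} (hπ : ∀ t, ∑' s, π s * P s t = π t)
    (f : α → ℝ≥0∞) : ∑' s, π s * kernelApply P f s = ∑' s, π s * f s := by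
  simp only [kernelApply, ← ENNReal.tsum_mul_left, ← mul_assoc]
  rw [ENNReal.tsum_comm]
  simp only [ENNReal.tsum_mul_right, hπ]

section Drift

variable {π f g : α → ℝ≥0∞} {a : ℝ≥0∞}

theorem tsum_mul_min_pow_mul_le (hP : ∀ s, ∑' t, P s t ≤ 1)
    (hπ : ∀ t, ∑' s, π s * P s t = π t)
    (hdrift : ∀ s, π s ≠ 0 → kernelApply P f s ≤ a * f s + g s) (N : ℝ≥0∞) (n : ℕ) :
    ∑' s, π s * min (a ^ n * f s) N
      ≤ ∑' s, π s * min (a ^ (n + 1) * f s) N + a ^ n * ∑' s, π s * g s := by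
  have hpt : ∀ s, π s * kernelApply P (fun t => min (a ^ n * f t) N) s
      ≤ π s * min (a ^ (n + 1) * f s) N + a ^ n * (π s * g s) := by
    intro s
    rcases eq_or_ne (π s) 0 with h0 | h0
    · simp [h0]
    calc π s * kernelApply P (fun t => min (a ^ n * f t) N) s
        ≤ π s * min (a ^ n * (a * f s + g s)) N := by
          gcongr
          refine (kernelApply_min_le (hP s) _ _).trans ?_
          rw [kernelApply_const_mul]
          gcongr
          exact hdrift s h0
      _ ≤ π s * (min (a ^ (n + 1) * f s) N + a ^ n * g s) := by
          gcongr
          rw [mul_add, pow_succ, mul_assoc]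
          exact (min_le_min_left _ le_self_add).trans (min_add_add_right _ _ _).le
      _ = π s * min (a ^ (n + 1) * f s) N + a ^ n * (π s * g s) := by ring
  calc ∑' s, π s * min (a ^ n * f s) N
      = ∑' s, π s * kernelApply P (fun t => min (a ^ n * f t) N) s :=
        (tsum_mul_kernelApply hπ _).symm
    _ ≤ ∑' s, (π s * min (a ^ (n + 1) * f s) N + a ^ n * (π s * g s)) :=
        ENNReal.tsum_le_tsum hpt
    _ = _ := by rw [ENNReal.tsum_add, ENNReal.tsum_mul_left]

theorem tendsto_tsum_mul_min_pow_mul (hπ_fin : ∑' s, π s ≠ ⊤) (hf : ∀ s, f s ≠ ⊤)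
    (ha : a < 1) (N : ℕ) :
    Tendsto (fun n => ∑' s, π s * min (a ^ n * f s) N) atTop (𝓝 0) := by
  have hpow : Tendsto (fun n => a ^ n) atTop (𝓝 0) :=
    ENNReal.tendsto_pow_atTop_nhds_zero_of_lt_one ha
  simpa using ENNReal.tendsto_tsum_of_dominated_convergence (f := fun _ => 0)
    (fun s => π s * N) (fun n s => by gcongr; exact min_le_right _ _)
    (by rw [ENNReal.tsum_mul_right]; exact ENNReal.mul_ne_top hπ_fin (by simp))
    (fun s => by
      simpa using ENNReal.Tendsto.const_mul ((ENNReal.Tendsto.mul_const hpow (.inr (hf s))).min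
        tendsto_const_nhds) (.inr (ENNReal.ne_top_of_tsum_ne_top hπ_fin s)))

/-- Foster–Lyapunov comparison theorem. -/
theorem tsum_mul_le_of_drift (hP : ∀ s, ∑' t, P s t ≤ 1)
    (hπ : ∀ t, ∑' s, π s * P s t = π t) (hπ_fin : ∑' s, π s ≠ ⊤) (hf : ∀ s, f s ≠ ⊤)
    (ha : a < 1) (hdrift : ∀ s, π s ≠ 0 → kernelApply P f s ≤ a * f s + g s) :
    ∑' s, π s * f s ≤ (1 - a)⁻¹ * ∑' s, π s * g s := by
  set G := ∑' s, π s * g s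
  refine ENNReal.tsum_le_of_forall_tsum_mul_min_le fun N => ?_
  -- `π f` may be infinite, so the drift is iterated on the truncations `min (aⁿ f) N` instead
  set A : ℕ → ℝ≥0∞ := fun n => ∑' s, π s * min (a ^ n * f s) N
  have iterate : ∀ n, A 0 ≤ A n + (∑ i ∈ Finset.range n, a ^ i) * G := by
    intro n
    induction n with
    | zero => simp
    | succ n ih =>
      calc A 0 ≤ A n + (∑ i ∈ Finset.range n, a ^ i) * G := ih
        _ ≤ A (n + 1) + a ^ n * G + (∑ i ∈ Finset.range n, a ^ i) * G := by
          gcongr; exact tsum_mul_min_pow_mul_le hP hπ hdrift _ n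
        _ = A (n + 1) + (∑ i ∈ Finset.range (n + 1), a ^ i) * G := by
          rw [Finset.sum_range_succ]; ring
  have hgeom : ∀ n, A 0 ≤ A n + (1 - a)⁻¹ * G := fun n => by
    refine (iterate n).trans ?_
    gcongr
    rw [← ENNReal.tsum_geometric]
    exact ENNReal.sum_le_tsum _
  simpa [A] using ge_of_tendsto
    (by simpa using (tendsto_tsum_mul_min_pow_mul hπ_fin hf ha N).add_const ((1 - a)⁻¹ * G))
    (.of_forall hgeom)

end Drift

end Kernel

theorem hasSum_ite_eq_mul {β : Type*} [DecidableEq β] (t₀ : β) (c : ℝ) (h : β → ℝ) :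
    HasSum (fun t => (if t = t₀ then c else 0) * h t) (c * h t₀) := by
  convert hasSum_ite_eq t₀ (c * h t₀) using 2 with t
  split_ifs with ht
  · rw [ht]
  · exact zero_mul _

theorem hasSum_sum_ite_eq_mul {β ι : Type*} [DecidableEq β] (F : Finset ι) (t₀ : ι → β)
    (c : ι → ℝ) (h : β → ℝ) :
    HasSum (fun t => (∑ i ∈ F, if t = t₀ i then c i else 0) * h t) (∑ i ∈ F, c i * h (t₀ i)) := by
  simp only [Finset.sum_mul]
  exact hasSum_sum fun i _ => hasSum_ite_eq_mul (t₀ i) (c i) h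

theorem ENNReal.tsum_ofReal_mul_ofReal {β : Type*} {π p : β → ℝ} (hπ0 : ∀ s, 0 ≤ π s)
    (hπ : Summable π) (hp0 : ∀ s, 0 ≤ p s) (hp1 : ∀ s, p s ≤ 1) :
    ∑' s, ENNReal.ofReal (π s) * ENNReal.ofReal (p s) = ENNReal.ofReal (∑' s, π s * p s) := by
  have hnn : ∀ s, 0 ≤ π s * p s := fun s => mul_nonneg (hπ0 s) (hp0 s)
  simp only [← ENNReal.ofReal_mul (hπ0 _)]
  exact (ENNReal.ofReal_tsum_of_nonneg hnn
    (hπ.of_nonneg_of_le hnn fun s => mul_le_of_le_one_right (hπ0 s) (hp1 s))).symm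

theorem ENNReal.sum_one_sub_mul_toReal_eq {ι : Type*} {s : Finset ι} {x y : ι → ℝ≥0∞}
    {c d : ι → ℝ} (hc : ∀ i, 0 ≤ c i) (hd : ∀ i, 0 ≤ d i) (hx : ∀ i ∈ s, x i ≠ ⊤)
    (hy : ∀ i ∈ s, y i ≠ ⊤)
    (h : ∑ i ∈ s, (x i + y i)
      = ∑ i ∈ s, (ENNReal.ofReal (c i) * x i + ENNReal.ofReal (d i) * y i)) :
    ∑ i ∈ s, (1 - c i) * (x i).toReal = ∑ i ∈ s, (d i - 1) * (y i).toReal := by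
  have hreal := congrArg ENNReal.toReal h
  rw [ENNReal.toReal_sum fun i hi => ENNReal.add_ne_top.2 ⟨hx i hi, hy i hi⟩,
    ENNReal.toReal_sum fun i hi => ENNReal.add_ne_top.2
      ⟨ENNReal.mul_ne_top ENNReal.ofReal_ne_top (hx i hi),
        ENNReal.mul_ne_top ENNReal.ofReal_ne_top (hy i hi)⟩] at hreal
  rw [Finset.sum_congr rfl fun i hi => ENNReal.toReal_add (hx i hi) (hy i hi),
    Finset.sum_congr rfl fun i hi => ENNReal.toReal_add
      (ENNReal.mul_ne_top ENNReal.ofReal_ne_top (hx i hi))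
      (ENNReal.mul_ne_top ENNReal.ofReal_ne_top (hy i hi))] at hreal
  simp only [ENNReal.toReal_mul, ENNReal.toReal_ofReal (hc _), ENNReal.toReal_ofReal (hd _),
    Finset.sum_add_distrib] at hreal
  simp only [sub_mul, one_mul, Finset.sum_sub_distrib]
  linarith

section Transition

variable {k : ℕ} {lam : ℝ} {μ : Fin k → ℝ}

noncomputable def jsqMean (k : ℕ) (lam : ℝ) (μ : Fin k → ℝ) (h : ℕ × (Fin k → ℕ) → ℝ)
    (s : ℕ × (Fin k → ℕ)) : ℝ :=
  (if (zeroSet k s.2).card = 1 then lam * h (s.1 + 1, fun j => s.2 j - 1)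
    else ∑ i ∈ zeroSet k s.2, lam / (zeroSet k s.2).card * h (s.1, Function.update s.2 i 1))
  + ∑ j ∈ (zeroSet k s.2)ᶜ, μ j * h (s.1, Function.update s.2 j (s.2 j - 1))
  + ∑ i ∈ zeroSet k s.2, μ i *
      h (if s.1 = 0 then s else (s.1 - 1, fun j => if j = i then 0 else s.2 j + 1))

theorem hasSum_jsqP_mul (h : ℕ × (Fin k → ℕ) → ℝ) (s : ℕ × (Fin k → ℕ)) :
    HasSum (fun t => jsqP k lam μ s t * h t) (jsqMean k lam μ h s) := by
  simp only [jsqP, jsqMean, add_mul]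
  refine HasSum.add (HasSum.add ?_ (hasSum_sum_ite_eq_mul _ _ _ h)) (hasSum_sum_ite_eq_mul _ _ _ h)
  split_ifs
  · exact hasSum_ite_eq_mul _ _ h
  · exact hasSum_sum_ite_eq_mul _ _ _ h

theorem jsqP_nonneg (hlam : 0 ≤ lam) (hμ : ∀ i, 0 ≤ μ i) (s t : ℕ × (Fin k → ℕ)) :
    0 ≤ jsqP k lam μ s t := by
  unfold jsqP
  refine add_nonneg (add_nonneg ?_ ?_) ?_
  · positivity
  · exact Finset.sum_nonneg fun j _ => ite_nonneg (hμ j) le_rfl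
  · exact Finset.sum_nonneg fun i _ => ite_nonneg (hμ i) le_rfl

theorem jsqMean_one_le (hlam : 0 ≤ lam) (hnorm : lam + ∑ i, μ i = 1) (s : ℕ × (Fin k → ℕ)) :
    jsqMean k lam μ (fun _ => 1) s ≤ 1 := by
  have harrival : (if (zeroSet k s.2).card = 1 then lam * 1
      else ∑ _i ∈ zeroSet k s.2, lam / (zeroSet k s.2).card * 1) ≤ lam := by
    split_ifs
    · simp
    · rcases (zeroSet k s.2).eq_empty_or_nonempty with h | h
      · simp [h, hlam]
      · rw [Finset.sum_const, nsmul_eq_mul, mul_one, mul_div_cancel₀]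
        exact_mod_cast h.card_pos.ne'
  have hservice : ∑ j ∈ (zeroSet k s.2)ᶜ, μ j * 1 + ∑ i ∈ zeroSet k s.2, μ i * 1 = ∑ i, μ i := by
    simp only [mul_one]
    exact Finset.sum_compl_add_sum _ _
  unfold jsqMean
  linarith

theorem jsqP_le_one (hlam : 0 ≤ lam) (hμ : ∀ i, 0 ≤ μ i) (hnorm : lam + ∑ i, μ i = 1)
    (s t : ℕ × (Fin k → ℕ)) : jsqP k lam μ s t ≤ 1 := by
  have h := hasSum_jsqP_mul (lam := lam) (μ := μ) (fun _ => 1) s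
  simp only [mul_one] at h
  exact (le_hasSum h t fun t' _ => jsqP_nonneg hlam hμ s t').trans (jsqMean_one_le hlam hnorm s)

theorem kernelApply_ofReal_jsqP (hlam : 0 ≤ lam) (hμ : ∀ i, 0 ≤ μ i)
    {h : ℕ × (Fin k → ℕ) → ℝ} (hh : ∀ t, 0 ≤ h t) (s : ℕ × (Fin k → ℕ)) :
    kernelApply (fun s t => ENNReal.ofReal (jsqP k lam μ s t)) (fun t => ENNReal.ofReal (h t)) s
      = ENNReal.ofReal (jsqMean k lam μ h s) := by
  have hnn : ∀ t, 0 ≤ jsqP k lam μ s t * h t := fun t => mul_nonneg (jsqP_nonneg hlam hμ s t) (hh t)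
  simp only [kernelApply, ← ENNReal.ofReal_mul (jsqP_nonneg hlam hμ s _)]
  rw [← ENNReal.ofReal_tsum_of_nonneg hnn (hasSum_jsqP_mul h s).summable,
    (hasSum_jsqP_mul h s).tsum_eq]

theorem tsum_ofReal_jsqP_le_one (hlam : 0 ≤ lam) (hμ : ∀ i, 0 ≤ μ i)
    (hnorm : lam + ∑ i, μ i = 1) (s : ℕ × (Fin k → ℕ)) :
    ∑' t, ENNReal.ofReal (jsqP k lam μ s t) ≤ 1 := by
  simpa [kernelApply] using (kernelApply_ofReal_jsqP hlam hμ (fun _ => zero_le_one) s).trans_le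
    (ENNReal.ofReal_le_one.mpr (jsqMean_one_le hlam hnorm s))

end Transition

section Weights

variable {k : ℕ} (θ : Fin (k + 1) → ℝ)

theorem expWeight_pos (s : ℕ × (Fin k → ℕ)) : 0 < expWeight k θ s :=
  Real.exp_pos _

theorem expWeight_eq_exp_mul (s t : ℕ × (Fin k → ℕ)) :
    expWeight k θ t = Real.exp (θ 0 * ((t.1 : ℝ) - s.1)
      + ∑ i, θ i.succ * ((t.2 i : ℝ) - s.2 i)) * expWeight k θ s := by
  simp only [expWeight, ← Real.exp_add, mul_sub, Finset.sum_sub_distrib]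
  ring_nf

theorem expWeight_raise_min (s : ℕ × (Fin k → ℕ)) :
    expWeight k θ (s.1 + 1, fun j => s.2 j - 1)
      = Real.exp (θ 0 - ∑ j ∈ (zeroSet k s.2)ᶜ, θ j.succ) * expWeight k θ s := by
  have hdiff : ∀ j, θ j.succ * (((s.2 j - 1 : ℕ) : ℝ) - s.2 j)
      = -(if s.2 j = 0 then 0 else θ j.succ) := by
    intro j
    split_ifs with h
    · simp [h]
    · rw [Nat.cast_sub (Nat.one_le_iff_ne_zero.mpr h)]; ring
  rw [expWeight_eq_exp_mul θ s]
  simp only [hdiff, Finset.sum_neg_distrib, zeroSet, Finset.compl_filter, Finset.sum_filter,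
    ite_not]
  push_cast
  ring_nf

theorem expWeight_update_one {s : ℕ × (Fin k → ℕ)} {i : Fin k} (hi : i ∈ zeroSet k s.2) :
    expWeight k θ (s.1, Function.update s.2 i 1) = Real.exp (θ i.succ) * expWeight k θ s := by
  have hdiff : ∀ j, θ j.succ * (((Function.update s.2 i 1 j : ℕ) : ℝ) - s.2 j)
      = if j = i then θ i.succ else 0 := by
    intro j
    rcases eq_or_ne j i with rfl | h
    · simp_all [zeroSet]
    · simp [h]
  rw [expWeight_eq_exp_mul θ s]
  simp [hdiff]

theorem expWeight_update_pred {s : ℕ × (Fin k → ℕ)} {j : Fin k} (hj : j ∈ (zeroSet k s.2)ᶜ) :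
    expWeight k θ (s.1, Function.update s.2 j (s.2 j - 1))
      = Real.exp (-θ j.succ) * expWeight k θ s := by
  have hj' : 1 ≤ s.2 j := Nat.one_le_iff_ne_zero.mpr (by simpa [zeroSet] using hj)
  have hdiff : ∀ l, θ l.succ * (((Function.update s.2 j (s.2 j - 1) l : ℕ) : ℝ) - s.2 l)
      = if l = j then -θ j.succ else 0 := by
    intro l
    rcases eq_or_ne l j with rfl | h
    · simp [Nat.cast_sub hj']
    · simp [h]
  rw [expWeight_eq_exp_mul θ s]
  simp [hdiff]

theorem expWeight_lower_min {s : ℕ × (Fin k → ℕ)} {i : Fin k} (hi : i ∈ zeroSet k s.2)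
    (hm : s.1 ≠ 0) :
    expWeight k θ (s.1 - 1, fun j => if j = i then 0 else s.2 j + 1)
      = Real.exp (-θ 0 + ∑ j ∈ Finset.univ.erase i, θ j.succ) * expWeight k θ s := by
  have hdiff : ∀ j, θ j.succ * ((((if j = i then 0 else s.2 j + 1 : ℕ)) : ℝ) - s.2 j)
      = if j = i then 0 else θ j.succ := by
    intro j
    rcases eq_or_ne j i with rfl | h
    · simp_all [zeroSet]
    · simp [h]
  rw [expWeight_eq_exp_mul θ s]
  simp only [hdiff, Finset.sum_ite, Finset.sum_const_zero, zero_add, Nat.cast_sub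
    (Nat.one_le_iff_ne_zero.mpr hm)]
  congr 3
  · push_cast; ring
  · rw [Finset.filter_ne']

end Weights

section Gamma

variable {k : ℕ} {lam : ℝ} {μ : Fin k → ℝ} (θ : Fin (k + 1) → ℝ)

noncomputable def jsqGamma (k : ℕ) (lam : ℝ) (μ : Fin k → ℝ) (θ : Fin (k + 1) → ℝ)
    (s : ℕ × (Fin k → ℕ)) : ℝ :=
  if s.1 = 0 then gammaZero k lam μ (zeroSet k s.2) θ else gammaPlus k lam μ (zeroSet k s.2) θ

theorem jsqMean_expWeight (s : ℕ × (Fin k → ℕ)) :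
    jsqMean k lam μ (expWeight k θ) s = jsqGamma k lam μ θ s * expWeight k θ s := by
  have harrival : (if (zeroSet k s.2).card = 1 then
        lam * expWeight k θ (s.1 + 1, fun j => s.2 j - 1)
      else ∑ i ∈ zeroSet k s.2, lam / (zeroSet k s.2).card *
        expWeight k θ (s.1, Function.update s.2 i 1))
      = (if (zeroSet k s.2).card = 1 then lam * Real.exp (θ 0 - ∑ j ∈ (zeroSet k s.2)ᶜ, θ j.succ)
        else ∑ i ∈ zeroSet k s.2, lam / (zeroSet k s.2).card * Real.exp (θ i.succ))
        * expWeight k θ s := by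
    split_ifs
    · rw [expWeight_raise_min]; ring
    · rw [Finset.sum_mul]
      exact Finset.sum_congr rfl fun i hi => by rw [expWeight_update_one θ hi]; ring
  have hdeparture :
      ∑ j ∈ (zeroSet k s.2)ᶜ, μ j * expWeight k θ (s.1, Function.update s.2 j (s.2 j - 1))
      = (∑ j ∈ (zeroSet k s.2)ᶜ, μ j * Real.exp (-θ j.succ)) * expWeight k θ s := by
    rw [Finset.sum_mul]
    exact Finset.sum_congr rfl fun j hj => by rw [expWeight_update_pred θ hj]; ring
  unfold jsqMean jsqGamma gammaZero gammaPlus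
  rw [harrival, hdeparture]
  by_cases hm : s.1 = 0
  · simp only [hm, ↓reduceIte, add_mul, Finset.sum_mul]
  · simp only [hm, ↓reduceIte, add_mul, Finset.sum_mul]
    congr 1
    exact Finset.sum_congr rfl fun i hi => by rw [expWeight_lower_min θ hi hm]; ring

variable (hlam : 0 ≤ lam) (hμ : ∀ i, 0 ≤ μ i) (U : Finset (Fin k))
include hlam hμ

theorem gammaPlus_nonneg : 0 ≤ gammaPlus k lam μ U θ := by
  unfold gammaPlus
  refine add_nonneg (add_nonneg (by positivity) ?_) ?_ <;>
    exact Finset.sum_nonneg fun i _ => mul_nonneg (hμ i) (Real.exp_nonneg _)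

theorem gammaZero_nonneg : 0 ≤ gammaZero k lam μ U θ := by
  unfold gammaZero
  refine add_nonneg (add_nonneg (by positivity)
    (Finset.sum_nonneg fun i _ => mul_nonneg (hμ i) (Real.exp_nonneg _)))
    (Finset.sum_nonneg fun i _ => hμ i)

end Gamma

section ShortestSets

variable {k : ℕ}

theorem tsum_eq_sum_shortestSets {F : ℕ × (Fin k → ℕ) → ℝ≥0∞}
    (hF : ∀ s, zeroSet k s.2 = ∅ → F s = 0) :
    ∑' s, F s = ∑ U ∈ Finset.univ.filter (fun U : Finset (Fin k) => U.Nonempty),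
      ((∑' s, if 1 ≤ s.1 ∧ zeroSet k s.2 = U then F s else 0)
        + ∑' s, if s.1 = 0 ∧ zeroSet k s.2 = U then F s else 0) := by
  simp only [← ENNReal.tsum_add]
  rw [← Summable.tsum_finsetSum fun _ _ => ENNReal.summable]
  refine tsum_congr fun s => ?_
  rcases (zeroSet k s.2).eq_empty_or_nonempty with h | h
  · simp [hF s h]
  · have hlevel : ∀ U, ((if 1 ≤ s.1 ∧ zeroSet k s.2 = U then F s else 0)
        + if s.1 = 0 ∧ zeroSet k s.2 = U then F s else 0)
        = if zeroSet k s.2 = U then F s else 0 := by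
      intro U
      by_cases hm : s.1 = 0 <;> simp [hm, Nat.one_le_iff_ne_zero]
    rw [Finset.sum_congr rfl fun U _ => hlevel U, Finset.sum_ite_eq, if_pos (by simpa using h)]

theorem tsum_levelZero_eq_sum_shortestSets {F : ℕ × (Fin k → ℕ) → ℝ≥0∞}
    (hF : ∀ s, zeroSet k s.2 = ∅ → F s = 0) :
    ∑' s, (if s.1 = 0 then F s else 0)
      = ∑ U ∈ Finset.univ.filter (fun U : Finset (Fin k) => U.Nonempty),
      ∑' s, if s.1 = 0 ∧ zeroSet k s.2 = U then F s else 0 := by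
  rw [tsum_eq_sum_shortestSets fun s hs => by simp [hF s hs]]
  refine Finset.sum_congr rfl fun U _ => ?_
  rw [tsum_congr fun s => (?_ : (if 1 ≤ s.1 ∧ zeroSet k s.2 = U then
    (if s.1 = 0 then F s else 0) else 0) = 0), tsum_zero, zero_add]
  · exact tsum_congr fun s => by split_ifs <;> simp_all
  · split_ifs <;> simp_all

variable {lam : ℝ} {μ : Fin k → ℝ} (θ : Fin (k + 1) → ℝ) (q : ℕ × (Fin k → ℕ) → ℝ≥0∞)
  (U : Finset (Fin k))

theorem tsum_levelPlus_ofReal_jsqGamma_mul :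
    ∑' s, (if 1 ≤ s.1 ∧ zeroSet k s.2 = U then
      ENNReal.ofReal (jsqGamma k lam μ θ s) * q s else 0)
      = ENNReal.ofReal (gammaPlus k lam μ U θ) *
        ∑' s, if 1 ≤ s.1 ∧ zeroSet k s.2 = U then q s else 0 := by
  rw [← ENNReal.tsum_mul_left]
  refine tsum_congr fun s => ?_
  split_ifs with h
  · rw [jsqGamma, if_neg (by omega), h.2]
  · rw [mul_zero]

theorem tsum_levelZero_ofReal_jsqGamma_mul :
    ∑' s, (if s.1 = 0 ∧ zeroSet k s.2 = U then
      ENNReal.ofReal (jsqGamma k lam μ θ s) * q s else 0)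
      = ENNReal.ofReal (gammaZero k lam μ U θ) *
        ∑' s, if s.1 = 0 ∧ zeroSet k s.2 = U then q s else 0 := by
  rw [← ENNReal.tsum_mul_left]
  refine tsum_congr fun s => ?_
  split_ifs with h
  · rw [jsqGamma, if_pos h.1, h.2]
  · rw [mul_zero]

end ShortestSets

section Stationary

variable {k : ℕ} {lam : ℝ} {μ : Fin k → ℝ} {π : ℕ × (Fin k → ℕ) → ℝ} (θ : Fin (k + 1) → ℝ)
  (hlam : 0 ≤ lam) (hμ : ∀ i, 0 ≤ μ i) (hnorm : lam + ∑ i, μ i = 1) (hπnn : ∀ s, 0 ≤ π s)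
  (hπsupp : ∀ s, π s ≠ 0 → ∃ i : Fin k, s.2 i = 0) (hπsum : HasSum π 1)
  (hπstat : ∀ s', (∑' s, π s * jsqP k lam μ s s') = π s')

include hπsupp in
theorem eq_zero_of_zeroSet_eq_empty {s : ℕ × (Fin k → ℕ)} (hs : zeroSet k s.2 = ∅) : π s = 0 := by
  by_contra h
  obtain ⟨i, hi⟩ := hπsupp s h
  simp [Finset.eq_empty_iff_forall_notMem, zeroSet] at hs
  exact hs i hi

include hlam hμ hnorm hπnn hπsum hπstat in
theorem tsum_ofReal_mul_ofReal_jsqP (t : ℕ × (Fin k → ℕ)) :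
    ∑' s, ENNReal.ofReal (π s) * ENNReal.ofReal (jsqP k lam μ s t) = ENNReal.ofReal (π t) := by
  rw [ENNReal.tsum_ofReal_mul_ofReal hπnn hπsum.summable (jsqP_nonneg hlam hμ · t)
    (jsqP_le_one hlam hμ hnorm · t), hπstat]

include hlam hμ in
theorem kernelApply_jsqP_expWeight (s : ℕ × (Fin k → ℕ)) :
    kernelApply (fun s t => ENNReal.ofReal (jsqP k lam μ s t))
      (fun t => ENNReal.ofReal (expWeight k θ t)) s
      = ENNReal.ofReal (jsqGamma k lam μ θ s) * ENNReal.ofReal (expWeight k θ s) := by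
  rw [kernelApply_ofReal_jsqP hlam hμ (fun t => (expWeight_pos θ t).le), jsqMean_expWeight,
    ENNReal.ofReal_mul' (expWeight_pos θ s).le]

include hlam hμ hnorm hπnn hπsupp hπsum hπstat in
theorem sum_phiPlus_add_phiZero_eq :
    ∑ U ∈ Finset.univ.filter (fun U : Finset (Fin k) => U.Nonempty),
        (phiPlus k π U θ + phiZero k π U θ)
      = ∑ U ∈ Finset.univ.filter (fun U : Finset (Fin k) => U.Nonempty),
        (ENNReal.ofReal (gammaPlus k lam μ U θ) * phiPlus k π U θ
          + ENNReal.ofReal (gammaZero k lam μ U θ) * phiZero k π U θ) := by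
  have hvanish : ∀ s, zeroSet k s.2 = ∅ → ENNReal.ofReal (π s * expWeight k θ s) = 0 :=
    fun s hs => by simp [eq_zero_of_zeroSet_eq_empty hπsupp hs]
  calc _ = ∑' s, ENNReal.ofReal (π s) * ENNReal.ofReal (expWeight k θ s) := by
        simp only [← ENNReal.ofReal_mul (hπnn _)]
        exact (tsum_eq_sum_shortestSets hvanish).symm
    _ = ∑' s, ENNReal.ofReal (jsqGamma k lam μ θ s) * ENNReal.ofReal (π s * expWeight k θ s) := by
        rw [← tsum_mul_kernelApply (tsum_ofReal_mul_ofReal_jsqP hlam hμ hnorm hπnn hπsum hπstat)]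
        refine tsum_congr fun s => ?_
        rw [kernelApply_jsqP_expWeight θ hlam hμ, ENNReal.ofReal_mul (hπnn s)]
        ring
    _ = _ := by
        rw [tsum_eq_sum_shortestSets fun s hs => by rw [hvanish s hs, mul_zero]]
        simp only [tsum_levelPlus_ofReal_jsqGamma_mul, tsum_levelZero_ofReal_jsqGamma_mul]
        rfl

-- the drift `γ_{+U} < 1` is only lost on level 0, where `φ_{0U} < ∞` pays for it
include hlam hμ in
theorem kernelApply_jsqP_expWeight_le {a : ℝ≥0∞}
    (ha : ∀ U : Finset (Fin k), U.Nonempty → ENNReal.ofReal (gammaPlus k lam μ U θ) ≤ a)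
    {s : ℕ × (Fin k → ℕ)} (hs : (zeroSet k s.2).Nonempty) :
    kernelApply (fun s t => ENNReal.ofReal (jsqP k lam μ s t))
      (fun t => ENNReal.ofReal (expWeight k θ t)) s
      ≤ a * ENNReal.ofReal (expWeight k θ s) + if s.1 = 0 then
        ENNReal.ofReal (jsqGamma k lam μ θ s) * ENNReal.ofReal (expWeight k θ s) else 0 := by
  rw [kernelApply_jsqP_expWeight θ hlam hμ]
  by_cases hm : s.1 = 0
  · rw [if_pos hm]
    exact le_add_self
  · rw [jsqGamma, if_neg hm, if_neg hm, add_zero]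
    gcongr
    exact ha _ hs

include hπnn hπsupp in
theorem tsum_ofReal_mul_levelZero_eq :
    ∑' s, ENNReal.ofReal (π s) * (if s.1 = 0 then
        ENNReal.ofReal (jsqGamma k lam μ θ s) * ENNReal.ofReal (expWeight k θ s) else 0)
      = ∑ U ∈ Finset.univ.filter (fun U : Finset (Fin k) => U.Nonempty),
        ENNReal.ofReal (gammaZero k lam μ U θ) * phiZero k π U θ := by
  calc _ = ∑' s, if s.1 = 0 then
        ENNReal.ofReal (jsqGamma k lam μ θ s) * ENNReal.ofReal (π s * expWeight k θ s) else 0 :=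
        tsum_congr fun s => by
          simp only [mul_ite, mul_zero, ENNReal.ofReal_mul (hπnn s)]
          ring_nf
    _ = _ := by
        rw [tsum_levelZero_eq_sum_shortestSets fun s hs => by
          simp [eq_zero_of_zeroSet_eq_empty hπsupp hs]]
        simp only [tsum_levelZero_ofReal_jsqGamma_mul]
        rfl

include hlam hμ hnorm hπnn hπsupp hπsum hπstat in
theorem phiPlus_lt_top (hfin : ∀ U : Finset (Fin k), U.Nonempty → phiZero k π U θ < ⊤)
    (hγ : ∀ U : Finset (Fin k), U.Nonempty → 0 < 1 - gammaPlus k lam μ U θ)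
    (U : Finset (Fin k)) : phiPlus k π U θ < ⊤ := by
  set 𝒰 := Finset.univ.filter (fun U : Finset (Fin k) => U.Nonempty)
  set a := 𝒰.sup fun U => ENNReal.ofReal (gammaPlus k lam μ U θ)
  have ha : a < 1 := (Finset.sup_lt_iff zero_lt_one).2 fun U hU =>
    ENNReal.ofReal_lt_one.2 (by linarith [hγ U (by simpa [𝒰] using hU)])
  have hπ_fin : ∑' s, ENNReal.ofReal (π s) ≠ ⊤ := by
    rw [← ENNReal.ofReal_tsum_of_nonneg hπnn hπsum.summable]
    exact ENNReal.ofReal_ne_top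
  calc phiPlus k π U θ ≤ ∑' s, ENNReal.ofReal (π s) * ENNReal.ofReal (expWeight k θ s) :=
        ENNReal.tsum_le_tsum fun s => by
          split_ifs
          · exact (ENNReal.ofReal_mul (hπnn s)).le
          · exact zero_le
    _ ≤ (1 - a)⁻¹ * ∑ U ∈ 𝒰, ENNReal.ofReal (gammaZero k lam μ U θ) * phiZero k π U θ := by
        rw [← tsum_ofReal_mul_levelZero_eq θ hπnn hπsupp]
        refine tsum_mul_le_of_drift (tsum_ofReal_jsqP_le_one hlam hμ hnorm)
          (tsum_ofReal_mul_ofReal_jsqP hlam hμ hnorm hπnn hπsum hπstat) hπ_fin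
          (fun _ => ENNReal.ofReal_ne_top) ha fun s hs => ?_
        refine kernelApply_jsqP_expWeight_le θ hlam hμ
          (fun U hU => Finset.le_sup (f := fun U => ENNReal.ofReal (gammaPlus k lam μ U θ))
            (by simpa [𝒰] using hU)) (Finset.nonempty_iff_ne_empty.2 fun h => hs ?_)
        simp [eq_zero_of_zeroSet_eq_empty hπsupp h]
    _ < ⊤ := ENNReal.mul_lt_top (ENNReal.inv_lt_top.2 (tsub_pos_of_lt ha))
        (ENNReal.sum_lt_top.2 fun U hU => ENNReal.mul_lt_top ENNReal.ofReal_lt_top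
          (hfin U (by simpa [𝒰] using hU)))

end Stationary

theorem jsq_stationary_inequality_a_general
    (k : ℕ) (lam : ℝ) (μ : Fin k → ℝ)
    (hlam : 0 < lam) (hμ : ∀ i, 0 < μ i)
    (hnorm : lam + ∑ i, μ i = 1)
    (π : ℕ × (Fin k → ℕ) → ℝ)
    (hπnn : ∀ s, 0 ≤ π s)
    (hπsupp : ∀ s, π s ≠ 0 → ∃ i : Fin k, s.2 i = 0)
    (hπsum : HasSum π 1)
    (hπstat : ∀ s', (∑' s, π s * jsqP k lam μ s s') = π s')
    (θ : Fin (k + 1) → ℝ)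
    (hfin : ∀ U : Finset (Fin k), U.Nonempty → phiZero k π U θ < ⊤)
    (hγ : ∀ U : Finset (Fin k), U.Nonempty → 0 < 1 - gammaPlus k lam μ U θ) :
    (∀ U : Finset (Fin k), U.Nonempty → phiPlus k π U θ < ⊤) ∧
    (∑ U ∈ Finset.univ.filter (fun U : Finset (Fin k) => U.Nonempty),
        (1 - gammaPlus k lam μ U θ) * (phiPlus k π U θ).toReal)
      ≤ ∑ U ∈ Finset.univ.filter (fun U : Finset (Fin k) => U.Nonempty),
          (gammaZero k lam μ U θ - 1) * (phiZero k π U θ).toReal := by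
  have hμ' : ∀ i, 0 ≤ μ i := fun i => (hμ i).le
  have hplus : ∀ U, phiPlus k π U θ < ⊤ :=
    phiPlus_lt_top θ hlam.le hμ' hnorm hπnn hπsupp hπsum hπstat hfin hγ
  refine ⟨fun U _ => hplus U, le_of_eq ?_⟩
  exact ENNReal.sum_one_sub_mul_toReal_eq (gammaPlus_nonneg θ hlam.le hμ')
    (gammaZero_nonneg θ hlam.le hμ') (fun U _ => (hplus U).ne)
    (fun U hU => (hfin U (by simpa using hU)).ne)
    (sum_phiPlus_add_phiZero_eq θ hlam.le hμ' hnorm hπnn hπsupp hπsum hπstat)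

/-- **Stationary inequality (a):** if `φ_{0U}(θ) < ∞` and `1 − γ_{+U}(θ) > 0` for every
nonempty `U ⊆ J`, then all `φ_{+U}(θ)` are finite and
`Σ_U (1 − γ_{+U}(θ)) φ_{+U}(θ) ≤ Σ_U (γ_{0U}(θ) − 1) φ_{0U}(θ) < ∞`. -/
theorem jsq_stationary_inequality_a
    (k : ℕ) (hk : 2 ≤ k) (lam : ℝ) (μ : Fin k → ℝ)
    (hlam : 0 < lam) (hμ : ∀ i, 0 < μ i)
    (hnorm : lam + ∑ i, μ i = 1)
    (hρ : rho k lam μ < 1)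
    (π : ℕ × (Fin k → ℕ) → ℝ)
    (hπnn : ∀ s, 0 ≤ π s)
    (hπsupp : ∀ s, π s ≠ 0 → ∃ i : Fin k, s.2 i = 0)
    (hπsum : HasSum π 1)
    (hπstat : ∀ s', (∑' s, π s * jsqP k lam μ s s') = π s')
    (θ : Fin (k + 1) → ℝ)
    (hfin : ∀ U : Finset (Fin k), U.Nonempty → phiZero k π U θ < ⊤)
    (hγ : ∀ U : Finset (Fin k), U.Nonempty → 0 < 1 - gammaPlus k lam μ U θ) :
    (∀ U : Finset (Fin k), U.Nonempty → phiPlus k π U θ < ⊤) ∧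
    (∑ U ∈ Finset.univ.filter (fun U : Finset (Fin k) => U.Nonempty),
        (1 - gammaPlus k lam μ U θ) * (phiPlus k π U θ).toReal)
      ≤ ∑ U ∈ Finset.univ.filter (fun U : Finset (Fin k) => U.Nonempty),
          (gammaZero k lam μ U θ - 1) * (phiZero k π U θ).toReal :=
  jsq_stationary_inequality_a_general k lam μ hlam hμ hnorm π hπnn hπsupp hπsum hπstat θ hfin hγ
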